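/- arXiv:1702.02489 — 2 statements merged into one kernel-verified Lean document; each statement's English description precedes it below -/
import Mathlib

section
/- The set of periodic points of G_{f₀} is dense in (𝒳, d): for every (Š,Ě) ∈ 𝒳 and every ε > 0 there exists a point (S̃,Ẽ) with G_{f₀}^p(S̃,Ẽ) = (S̃,Ẽ) for some p ≥ 1 and d((Š,Ě),(S̃,Ẽ)) < ε. -/
open scoped BigOperators

/-- Strategy distance: `(9/N) * Σ_k |S^k - Š^k| / 10^(k+1)`. -/
noncomputable def ds (N : ℕ) (S T : ℕ → Fin N) : ℝ :=
  (9 / N) * ∑' k : ℕ, |((S k : ℕ) : ℝ) - ((T k : ℕ) : ℝ)| / 10 ^ (k + 1)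

/-- Hamming distance between boolean configurations. -/
def de {N : ℕ} (E F : Fin N → Bool) : ℝ :=
  ∑ k : Fin N, if E k = F k then (0 : ℝ) else 1

/-- Distance on the phase space `𝒳 = ⟦1,N⟧^ℕ × 𝔹^N`. -/
noncomputable def dX {N : ℕ} (X Y : (ℕ → Fin N) × (Fin N → Bool)) : ℝ :=
  de X.2 Y.2 + ds N X.1 Y.1

/-- `F_f(k, E)`: equals `E` except at coordinate `k`, where it is `f(E)_k`. -/
def Ff {N : ℕ} (f : (Fin N → Bool) → (Fin N → Bool)) (k : Fin N)
    (E : Fin N → Bool) : Fin N → Bool :=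
  fun j => if j = k then f E k else E j

/-- `G_f(S, E) = (σ(S), F_f(S⁰, E))`. -/
def Gf {N : ℕ} (f : (Fin N → Bool) → (Fin N → Bool))
    (X : (ℕ → Fin N) × (Fin N → Bool)) : (ℕ → Fin N) × (Fin N → Bool) :=
  (fun n => X.1 (n + 1), Ff f (X.1 0) X.2)

/-- The vectorial boolean negation. -/
def f0 {N : ℕ} (E : Fin N → Bool) : Fin N → Bool := fun i => !(E i)


/-! Under `G_{f₀}` the strategy is shifted and every visit of coordinate `j` negates `E j`, so
after `m` steps `E j` has been flipped according to the parity of the number of visits to `j`.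
Repeating the first `n` terms of a strategy gives an `n`-periodic strategy within `10⁻ⁿ` of it;
along such a strategy each coordinate is visited an even number of times in `2n` steps, so the
point is `2n`-periodic. -/

lemma iterate_Gf_f0 {N : ℕ} (m : ℕ) (S : ℕ → Fin N) (E : Fin N → Bool) :
    (Gf f0)^[m] (S, E) =
      (fun k => S (k + m), fun j => E j ^^ (Nat.count (fun i => S i = j) m).bodd) := by
  induction m with
  | zero => simp
  | succ m ih =>
    rw [Function.iterate_succ_apply', ih]
    refine Prod.ext (funext fun k => congrArg S (by omega)) (funext fun j => ?_)
    by_cases hj : S m = j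
    · simp [Gf, Ff, f0, Nat.count_succ, hj]
    · simp [Gf, Ff, Nat.count_succ, hj, Ne.symm hj]

lemma iterate_Gf_f0_two_mul_of_periodic {N n : ℕ} {S : ℕ → Fin N} (hS : Function.Periodic S n)
    (E : Fin N → Bool) : (Gf f0)^[2 * n] (S, E) = (S, E) := by
  have hvisits : ∀ j,
      Nat.count (fun i => S i = j) (2 * n) = 2 * Nat.count (fun i => S i = j) n := by
    intro j
    simp [two_mul, Nat.count_add, add_comm n, hS _]
  rw [iterate_Gf_f0]
  refine Prod.ext (funext fun k => ?_) (funext fun j => ?_)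
  · simpa using hS.nat_mul 2 k
  · simp [hvisits, Nat.bodd_mul]

lemma tsum_le_geometric_tail_of_eq_zero {f : ℕ → ℝ} {C r : ℝ} {n : ℕ} (hr0 : 0 ≤ r)
    (hr1 : r < 1) (hf0 : ∀ k, 0 ≤ f k) (hf : ∀ k, f k ≤ C * r ^ k) (hzero : ∀ k < n, f k = 0) :
    ∑' k, f k ≤ C * r ^ n / (1 - r) := by
  have hgeom := hasSum_geometric_of_lt_one hr0 hr1
  have hsum : Summable f := (hgeom.summable.mul_left C).of_nonneg_of_le hf0 hf
  rw [← hsum.sum_add_tsum_nat_add n, Finset.sum_eq_zero fun k hk => hzero k (by simpa using hk),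
    zero_add, div_eq_mul_inv]
  refine hasSum_le (fun k => ?_) ((summable_nat_add_iff n).2 hsum).hasSum
    (hgeom.mul_left (C * r ^ n))
  simpa [pow_add, mul_assoc, mul_comm, mul_left_comm] using hf (k + n)

lemma ds_le_pow_of_eqOn_Iio {N : ℕ} {S T : ℕ → Fin N} {n : ℕ} (h : Set.EqOn S T (Set.Iio n)) :
    ds N S T ≤ (1 / 10) ^ n := by
  rcases N.eq_zero_or_pos with rfl | hN
  · simp [ds]
  have hdiff : ∀ k, |((S k : ℕ) : ℝ) - ((T k : ℕ) : ℝ)| ≤ N := fun k =>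
    (abs_sub_lt_of_nonneg_of_lt (by positivity) (by exact_mod_cast (S k).isLt)
      (by positivity) (by exact_mod_cast (T k).isLt)).le
  have htsum := tsum_le_geometric_tail_of_eq_zero (C := N / 10) (r := 1 / 10) (n := n)
    (f := fun k => |((S k : ℕ) : ℝ) - ((T k : ℕ) : ℝ)| / 10 ^ (k + 1)) (by norm_num) (by norm_num)
    (fun k => by positivity)
    (fun k => by
      rw [div_le_iff₀ (by positivity)]
      calc _ ≤ (N : ℝ) := hdiff k
        _ = _ := by rw [one_div_pow, pow_succ]; field_simp)
    (fun k hk => by simp [h hk])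
  calc ds N S T ≤ 9 / N * (N / 10 * (1 / 10) ^ n / (1 - 1 / 10)) :=
        mul_le_mul_of_nonneg_left htsum (by positivity)
    _ = (1 / 10) ^ n := by field_simp; norm_num

theorem periodic_points_dense_general (N : ℕ) :
    ∀ X : (ℕ → Fin N) × (Fin N → Bool), ∀ ε > (0 : ℝ),
      ∃ (Y : (ℕ → Fin N) × (Fin N → Bool)) (p : ℕ),
        1 ≤ p ∧ (Gf f0)^[p] Y = Y ∧ dX X Y < ε := by
  rintro ⟨S, E⟩ ε hε
  obtain ⟨n, hn⟩ := exists_pow_lt_of_lt_one hε (by norm_num : (1 / 10 : ℝ) < 1)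
  set T : ℕ → Fin N := fun k => S (k % (n + 1))
  have hT : Function.Periodic T (n + 1) := (Nat.periodic_mod (n + 1)).comp S
  have hST : Set.EqOn S T (Set.Iio (n + 1)) := fun k hk => by simp [T, Nat.mod_eq_of_lt hk]
  refine ⟨(T, E), 2 * (n + 1), by omega, iterate_Gf_f0_two_mul_of_periodic hT E, ?_⟩
  calc dX (S, E) (T, E) = ds N S T := by simp [dX, de]
    _ ≤ (1 / 10) ^ (n + 1) := ds_le_pow_of_eqOn_Iio hST
    _ ≤ (1 / 10) ^ n := pow_le_pow_of_le_one (by norm_num) (by norm_num) n.le_succ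
    _ < ε := hn

theorem periodic_points_dense (N : ℕ) (hN : 1 ≤ N) :
    ∀ X : (ℕ → Fin N) × (Fin N → Bool), ∀ ε > (0 : ℝ),
      ∃ (Y : (ℕ → Fin N) × (Fin N → Bool)) (p : ℕ),
        1 ≤ p ∧ (Gf f0)^[p] Y = Y ∧ dX X Y < ε :=
  periodic_points_dense_general N
end

section
/- G_{f₀} is topologically transitive on (𝒳, d): for any two nonempty open sets U, V ⊆ 𝒳 there exists n ≥ 1 with G_{f₀}^n(U) ∩ V ≠ ∅. -/
open scoped BigOperators

/-- `U` is open for the metric `dX`. -/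
def IsOpenD {N : ℕ} (U : Set ((ℕ → Fin N) × (Fin N → Bool))) : Prop :=
  ∀ x ∈ U, ∃ ε > (0 : ℝ), ∀ y, dX x y < ε → y ∈ U


/-!
The strategy is free, so a point can be steered anywhere: following a strategy that starts with a
long prefix of `S` and then lists the coordinates where the current configuration differs from `F`,
the orbit lands exactly on `(T, F)` once the strategy has been shifted down to `T`. Agreeing with
`S` on the first `k` terms costs at most `10⁻ᵏ` in the strategy distance, so that starting point
lies in any given ball around `(S, E)`.
-/

open Stream'

theorem Gf_iterate_append {N : ℕ} (f : (Fin N → Bool) → (Fin N → Bool)) (L : List (Fin N))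
    (S : Stream' (Fin N)) (E : Fin N → Bool) :
    (Gf f)^[L.length] (L ++ₛ S, E) = (S, L.foldl (fun E k => Ff f k E) E) := by
  induction L generalizing E with
  | nil => rfl
  | cons a L ih =>
    rw [List.length_cons, Function.iterate_succ_apply]
    exact ih (Ff f a E)

theorem foldl_Ff_f0_apply {N : ℕ} {L : List (Fin N)} (hL : L.Nodup) (E : Fin N → Bool)
    (j : Fin N) : L.foldl (fun E k => Ff f0 k E) E j = if j ∈ L then !E j else E j := by
  induction L generalizing E with
  | nil => simp
  | cons a L ih =>
    obtain ⟨haL, hL⟩ := List.nodup_cons.mp hL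
    rw [List.foldl_cons, ih hL]
    by_cases hja : j = a
    · subst hja
      simp [haL, Ff, f0]
    · simp [hja, Ff]

theorem exists_foldl_Ff_f0_eq {N : ℕ} (E F : Fin N → Bool) :
    ∃ L : List (Fin N), L.foldl (fun E k => Ff f0 k E) E = F := by
  refine ⟨(Finset.univ.filter fun j => E j ≠ F j).toList, funext fun j => ?_⟩
  rw [foldl_Ff_f0_apply (Finset.nodup_toList _)]
  by_cases hj : E j = F j <;> simp [hj, Bool.eq_not_iff]

theorem exists_Gf_f0_iterate_append_eq {N : ℕ} (P : List (Fin N)) (T : ℕ → Fin N)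
    (E F : Fin N → Bool) :
    ∃ L : List (Fin N), (Gf f0)^[L.length + P.length] (P ++ₛ (L ++ₛ T), E) = (T, F) := by
  obtain ⟨L, hL⟩ := exists_foldl_Ff_f0_eq (P.foldl (fun E k => Ff f0 k E) E) F
  refine ⟨L, ?_⟩
  rw [Function.iterate_add_apply]
  exact (congrArg _ (Gf_iterate_append f0 P _ E)).trans
    ((Gf_iterate_append f0 L T _).trans (congrArg (Prod.mk T) hL))

theorem abs_sub_fin_le {N : ℕ} (a b : Fin N) : |((a : ℕ) : ℝ) - ((b : ℕ) : ℝ)| ≤ N := by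
  have ha : ((a : ℕ) : ℝ) < N := by exact_mod_cast a.isLt
  have hb : ((b : ℕ) : ℝ) < N := by exact_mod_cast b.isLt
  rw [abs_sub_le_iff]
  constructor <;> linarith [(Nat.cast_nonneg (α := ℝ) (a : ℕ)), (Nat.cast_nonneg (α := ℝ) (b : ℕ))]

theorem ds_le_of_forall_lt_eq {N : ℕ} (S T : ℕ → Fin N) (k : ℕ) (h : ∀ i < k, S i = T i) :
    ds N S T ≤ (1 / 10) ^ k := by
  rcases N.eq_zero_or_pos with rfl | hN
  · exact (S 0).elim0
  set a : ℕ → ℝ := fun i => |((S i : ℕ) : ℝ) - ((T i : ℕ) : ℝ)| / 10 ^ (i + 1)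
  have ha_le (i : ℕ) : a i ≤ N / 10 * (1 / 10) ^ i := by
    calc a i ≤ N / 10 ^ (i + 1) := by simp only [a]; gcongr; exact abs_sub_fin_le _ _
      _ = N / 10 * (1 / 10) ^ i := by rw [one_div_pow, pow_succ]; field_simp
  have hgeom : Summable fun i : ℕ => N / 10 * (1 / 10 : ℝ) ^ i :=
    (summable_geometric_of_lt_one (by norm_num) (by norm_num)).mul_left _
  have ha : Summable a := hgeom.of_nonneg_of_le (fun i => by positivity) ha_le
  have hhead : ∑ i ∈ Finset.range k, a i = 0 :=
    Finset.sum_eq_zero fun i hi => by simp [a, h i (Finset.mem_range.mp hi)]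
  have htail : ∑' i, a (i + k) ≤ N / 9 * (1 / 10) ^ k :=
    calc ∑' i, a (i + k) ≤ ∑' i, (1 / 10 : ℝ) ^ k * (N / 10 * (1 / 10) ^ i) := by
          refine Summable.tsum_le_tsum (fun i => ?_) ((summable_nat_add_iff k).2 ha)
            (hgeom.mul_left _)
          calc a (i + k) ≤ N / 10 * (1 / 10) ^ (i + k) := ha_le _
            _ = _ := by ring
      _ = N / 9 * (1 / 10) ^ k := by
          rw [tsum_mul_left, tsum_mul_left, tsum_geometric_of_lt_one (by norm_num) (by norm_num)]
          ring
  calc ds N S T = 9 / N * ∑' i, a i := rfl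
    _ = 9 / N * ∑' i, a (i + k) := by rw [← ha.sum_add_tsum_nat_add k, hhead, zero_add]
    _ ≤ 9 / N * (N / 9 * (1 / 10) ^ k) := by gcongr
    _ = (1 / 10) ^ k := by field_simp

theorem Gf0_transitive_general (N : ℕ)
    (U V : Set ((ℕ → Fin N) × (Fin N → Bool)))
    (hU : IsOpenD U) (hUne : U.Nonempty) (hVne : V.Nonempty) :
    ∃ n : ℕ, 1 ≤ n ∧ ((Gf f0)^[n] '' U ∩ V).Nonempty := by
  obtain ⟨⟨S, E⟩, hSE⟩ := hUne
  obtain ⟨⟨T, F⟩, hTF⟩ := hVne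
  obtain ⟨ε, hε, hball⟩ := hU _ hSE
  obtain ⟨k, hk⟩ := exists_pow_lt_of_lt_one hε (by norm_num : (1 / 10 : ℝ) < 1)
  obtain ⟨L, hL⟩ := exists_Gf_f0_iterate_append_eq (take (k + 1) S) T E F
  set Z : Stream' (Fin N) := take (k + 1) S ++ₛ (L ++ₛ T)
  have hSZ (i : ℕ) (hi : i < k + 1) : S i = Z i :=
    ((get_append_left _ _ _ (lt_of_lt_of_eq hi (length_take _ _).symm)).trans (take_get ..)).symm
  refine ⟨_, by rw [length_take (k + 1) S]; omega, (T, F), ⟨(Z, E), hball _ ?_, hL⟩, hTF⟩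
  calc dX (S, E) (Z, E) = ds N S Z := by simp [dX, de]
    _ ≤ (1 / 10) ^ (k + 1) := ds_le_of_forall_lt_eq S Z _ hSZ
    _ < ε := lt_of_le_of_lt (pow_le_pow_of_le_one (by norm_num) (by norm_num) (by omega)) hk

theorem Gf0_transitive (N : ℕ) (hN : 1 ≤ N)
    (U V : Set ((ℕ → Fin N) × (Fin N → Bool)))
    (hU : IsOpenD U) (hV : IsOpenD V) (hUne : U.Nonempty) (hVne : V.Nonempty) :
    ∃ n : ℕ, 1 ≤ n ∧ ((Gf f0)^[n] '' U ∩ V).Nonempty :=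
  Gf0_transitive_general N U V hU hUne hVne
end
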